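/- arXiv:1404.2156 — 6 statements merged into one kernel-verified Lean document; each statement's English description precedes it below -/
import Mathlib

section
/- Let C be a quasicategory and let D be a simplicial subset of C having at most countably many m-simplices for each m. Then there exists a simplicial subset D₁ with D ⊆ D₁ ⊆ C such that D₁ has at most countably many m-simplices for each m and D₁ is itself a quasicategory. -/
/-!
Adjoin to `D` a chosen filler of every inner horn in `D`, and repeat countably often. A horn is a
finite simplicial set, so a levelwise countable simplicial set has only countably many horns and
each step keeps the levels countable; for the same reason every horn in the union of the tower
already lies in some finite stage, and its filler lies in the next one.
-/

open CategoryTheory Simplicial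

namespace SSet

variable {X Y : SSet}

lemma hom_ext_of_nonDegenerate {f g : X ⟶ Y}
    (h : ∀ s : X.N, f.app _ s.simplex = g.app _ s.simplex) : f = g := by
  ext ⟨m⟩ x
  induction m using SimplexCategory.rec with | _ m
  obtain ⟨n, e, _, y, rfl⟩ := X.exists_nonDegenerate x
  change f.app _ (X.map e.op y) = g.app _ (X.map e.op y)
  rw [NatTrans.naturality_apply, NatTrans.naturality_apply]
  exact congrArg _ (h (N.mk _ y.2))

lemma range_le_of_nonDegenerate (f : X ⟶ Y) (A : Y.Subcomplex)
    (h : ∀ s : X.N, f.app _ s.simplex ∈ A.obj _) : Subcomplex.range f ≤ A := by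
  rintro ⟨m⟩ _ ⟨x, rfl⟩
  induction m using SimplexCategory.rec with | _ m
  obtain ⟨n, e, _, y, rfl⟩ := X.exists_nonDegenerate x
  rw [NatTrans.naturality_apply]
  exact A.map _ (h (N.mk _ y.2))

instance countable_hom_of_finite [X.Finite] [∀ m, Countable (Y.obj m)] : Countable (X ⟶ Y) :=
  Function.Injective.countable (f := fun f (s : X.N) ↦ f.app _ s.simplex)
    fun _ _ h ↦ hom_ext_of_nonDegenerate (congrFun h)

lemma exists_range_le_of_le_iSup [X.Finite] {ι : Type*} [Preorder ι] [IsDirectedOrder ι]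
    [Nonempty ι] {A : ι → Y.Subcomplex} (hA : Monotone A) (f : X ⟶ Y)
    (hf : Subcomplex.range f ≤ ⨆ i, A i) : ∃ i, Subcomplex.range f ≤ A i := by
  have hmem (s : X.N) : ∃ i, f.app _ s.simplex ∈ (A i).obj _ := by
    simpa using hf _ ⟨s.simplex, rfl⟩
  choose stage hstage using hmem
  obtain ⟨i, hi⟩ := Finite.exists_le stage
  exact ⟨i, range_le_of_nonDegenerate f _ fun s ↦ hA (hi s) _ (hstage s)⟩

structure InnerHorn (X : SSet) where
  n : ℕ
  i : Fin (n + 1)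
  zero_lt : 0 < i
  lt_last : i < Fin.last n
  σ : (Λ[n, i] : SSet) ⟶ X

namespace InnerHorn

instance [∀ m, Countable (X.obj m)] : Countable (InnerHorn X) :=
  Function.Injective.countable
    (f := fun x : InnerHorn X ↦
      (⟨x.n, x.i, x.σ⟩ : Σ (n : ℕ) (i : Fin (n + 1)), (Λ[n, i] : SSet) ⟶ X))
    fun ⟨_, _, _, _, _⟩ ⟨_, _, _, _, _⟩ h ↦ by cases h; rfl

def map (x : InnerHorn X) (g : X ⟶ Y) : InnerHorn Y :=
  { x with σ := x.σ ≫ g }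

noncomputable def filler [X.Quasicategory] (x : InnerHorn X) : Δ[x.n] ⟶ X :=
  (Quasicategory.hornFilling x.zero_lt x.lt_last x.σ).choose

lemma ι_filler [X.Quasicategory] (x : InnerHorn X) : Λ[x.n, x.i].ι ≫ x.filler = x.σ :=
  (Quasicategory.hornFilling x.zero_lt x.lt_last x.σ).choose_spec.symm

end InnerHorn

namespace Subcomplex

variable {C : SSet} [C.Quasicategory]

noncomputable def fillInnerHorns (E : C.Subcomplex) : C.Subcomplex :=
  E ⊔ ⨆ x : InnerHorn E, range (x.map E.ι).filler

lemma le_fillInnerHorns (E : C.Subcomplex) : E ≤ fillInnerHorns E :=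
  le_sup_left

lemma range_filler_le_fillInnerHorns {E : C.Subcomplex} (x : InnerHorn E) :
    range (x.map E.ι).filler ≤ fillInnerHorns E :=
  le_sup_of_le_right (le_iSup (fun x : InnerHorn E ↦ range (x.map E.ι).filler) x)

lemma countable_fillInnerHorns_obj {E : C.Subcomplex} (hE : ∀ m, (E.obj m).Countable)
    (m : SimplexCategoryᵒᵖ) : ((fillInnerHorns E).obj m).Countable := by
  have : ∀ m, Countable (E.toSSet.obj m) := fun m ↦ (hE m).to_subtype
  simpa [fillInnerHorns] using (hE m).union (Set.countable_iUnion
    fun x : InnerHorn E ↦ Set.countable_range ((x.map E.ι).filler.app m))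

noncomputable def innerHornClosure (D : C.Subcomplex) : C.Subcomplex :=
  ⨆ k, fillInnerHorns^[k] D

lemma monotone_iterate_fillInnerHorns (D : C.Subcomplex) :
    Monotone fun k ↦ fillInnerHorns^[k] D :=
  monotone_nat_of_le_succ fun k ↦ by
    rw [Function.iterate_succ_apply']
    exact le_fillInnerHorns _

lemma le_innerHornClosure (D : C.Subcomplex) : D ≤ innerHornClosure D :=
  le_iSup (fun k ↦ fillInnerHorns^[k] D) 0

lemma countable_innerHornClosure_obj {D : C.Subcomplex} (hD : ∀ m, (D.obj m).Countable)
    (m : SimplexCategoryᵒᵖ) : ((innerHornClosure D).obj m).Countable := by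
  have hiter (k : ℕ) : ∀ m, ((fillInnerHorns^[k] D).obj m).Countable := by
    induction k with
    | zero => exact hD
    | succ k ih => simpa only [Function.iterate_succ_apply'] using countable_fillInnerHorns_obj ih
  simpa [innerHornClosure] using Set.countable_iUnion fun k ↦ hiter k m

instance quasicategory_innerHornClosure (D : C.Subcomplex) :
    Quasicategory (innerHornClosure D) where
  hornFilling' n i σ₀ h0 hn := by
    obtain ⟨k, hk⟩ := exists_range_le_of_le_iSup (monotone_iterate_fillInnerHorns D)
      (σ₀ ≫ (innerHornClosure D).ι)
      ((Subfunctor.range_comp_le _ _).trans (Subfunctor.range_ι _).le)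
    let x : InnerHorn (fillInnerHorns^[k] D) := ⟨n + 2, i, h0, hn, lift _ hk⟩
    have hx : range (x.map (fillInnerHorns^[k] D).ι).filler ≤ innerHornClosure D := by
      refine (range_filler_le_fillInnerHorns x).trans ?_
      rw [← Function.iterate_succ_apply' fillInnerHorns]
      exact le_iSup (fun k ↦ fillInnerHorns^[k] D) (k + 1)
    refine ⟨lift _ hx, ?_⟩
    rw [← cancel_mono (innerHornClosure D).ι]
    exact (x.map (fillInnerHorns^[k] D).ι).ι_filler.symm

end Subcomplex

end SSet

/-- Any countable simplicial subset of a quasicategory is contained in a countable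
simplicial subset which is itself a quasicategory. -/
theorem countable_sub_quasicategory_of_countable (C : SSet) [SSet.Quasicategory C]
    (D : Subfunctor C)
    (hD : ∀ n : SimplexCategoryᵒᵖ, (D.obj n).Countable) :
    ∃ D₁ : Subfunctor C,
      D ≤ D₁ ∧ (∀ n : SimplexCategoryᵒᵖ, (D₁.obj n).Countable) ∧
      SSet.Quasicategory D₁.toFunctor :=
  ⟨_, SSet.Subcomplex.le_innerHornClosure D, SSet.Subcomplex.countable_innerHornClosure_obj hD,
    inferInstance⟩
end

section
/- Let G and G' be profinite groups and let φ₁, φ₂ : G → G' be continuous group homomorphisms. Suppose that for every open normal subgroup N of G', the composites of φ₁ and φ₂ with the quotient map G' → G'/N are conjugate in G'/N. Then φ₁ and φ₂ are conjugate in G': there exists x ∈ G' with φ₂(g) = x·φ₁(g)·x⁻¹ for all g ∈ G. -/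
/-!
For an open normal subgroup `N` of `G'`, the elements conjugating `φ₁` into `φ₂` modulo `N` form
a closed set, nonempty by hypothesis, and these sets shrink as `N` does. By compactness of `G'`
they have a common point `x`. For each `g`, the element `(φ₂ g)⁻¹ * (x * φ₁ g * x⁻¹)` then lies
in every open normal subgroup, and in a compact totally disconnected group these intersect in `1`.
-/

instance OpenNormalSubgroup.instNonempty {G : Type*} [Group G] [TopologicalSpace G] :
    Nonempty (OpenNormalSubgroup G) :=
  ⟨{ toOpenSubgroup := ⊤, isNormal' := Subgroup.normal_top }⟩

theorem ProfiniteGrp.eq_one_of_forall_mem_openNormalSubgroup {G : Type*} [Group G]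
    [TopologicalSpace G] [IsTopologicalGroup G] [CompactSpace G] [TotallyDisconnectedSpace G]
    {x : G} (hx : ∀ N : OpenNormalSubgroup G, x ∈ N) : x = 1 := by
  by_contra hx1
  obtain ⟨N, hN⟩ := ProfiniteGrp.exist_openNormalSubgroup_sub_open_nhds_of_one
    isOpen_compl_singleton (Set.mem_compl_singleton_iff.mpr (Ne.symm hx1))
  exact hN (hx N) rfl

section ConjugatorsMod

variable {G G' : Type*} [Group G] [Group G'] (φ₁ φ₂ : G →* G')

def conjugatorsMod (N : Subgroup G') : Set G' :=
  {x | ∀ g, (φ₂ g)⁻¹ * (x * φ₁ g * x⁻¹) ∈ N}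

theorem conjugatorsMod_monotone : Monotone (conjugatorsMod φ₁ φ₂) :=
  fun _ _ hNM _ hx g => hNM (hx g)

theorem conjugatorsMod_nonempty (N : Subgroup G') [N.Normal]
    (h : ∃ x : G' ⧸ N, ∀ g : G,
      QuotientGroup.mk' N (φ₂ g) = x * QuotientGroup.mk' N (φ₁ g) * x⁻¹) :
    (conjugatorsMod φ₁ φ₂ N).Nonempty := by
  obtain ⟨x, hx⟩ := h
  obtain ⟨x, rfl⟩ := QuotientGroup.mk'_surjective N x
  exact ⟨x, fun g => QuotientGroup.eq.mp (by simpa using hx g)⟩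

theorem isClosed_conjugatorsMod [TopologicalSpace G'] [IsTopologicalGroup G'] {N : Subgroup G'}
    (hN : IsClosed (N : Set G')) : IsClosed (conjugatorsMod φ₁ φ₂ N) := by
  simp only [conjugatorsMod, Set.ofPred_forall]
  exact isClosed_iInter fun g => hN.preimage (by fun_prop)

theorem eq_conj_of_forall_mem_conjugatorsMod [TopologicalSpace G'] [IsTopologicalGroup G']
    [CompactSpace G'] [TotallyDisconnectedSpace G'] {x : G'}
    (hx : ∀ N : OpenNormalSubgroup G', x ∈ conjugatorsMod φ₁ φ₂ N) (g : G) :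
    φ₂ g = x * φ₁ g * x⁻¹ :=
  inv_mul_eq_one.mp <| ProfiniteGrp.eq_one_of_forall_mem_openNormalSubgroup fun N => hx N g

end ConjugatorsMod

theorem conj_of_forall_quotient_conj_general {G G' : Type*}
    [Group G]
    [Group G'] [TopologicalSpace G'] [IsTopologicalGroup G']
    [CompactSpace G'] [TotallyDisconnectedSpace G']
    (φ₁ φ₂ : G →* G')
    (h : ∀ (N : Subgroup G') [N.Normal], IsOpen (N : Set G') →
      ∃ x : G' ⧸ N, ∀ g : G,
        QuotientGroup.mk' N (φ₂ g) = x * QuotientGroup.mk' N (φ₁ g) * x⁻¹) :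
    ∃ x : G', ∀ g : G, φ₂ g = x * φ₁ g * x⁻¹ := by
  let C : OpenNormalSubgroup G' → Set G' := fun N => conjugatorsMod φ₁ φ₂ N
  have hC_closed N : IsClosed (C N) :=
    isClosed_conjugatorsMod φ₁ φ₂ N.toOpenSubgroup.isClosed
  have hC_directed : Directed (· ⊇ ·) C := fun N M =>
    ⟨N ⊓ M, conjugatorsMod_monotone φ₁ φ₂ (inf_le_left : N ⊓ M ≤ N),
      conjugatorsMod_monotone φ₁ φ₂ (inf_le_right : N ⊓ M ≤ M)⟩
  obtain ⟨x, hx⟩ := IsCompact.nonempty_iInter_of_directed_nonempty_isCompact_isClosed C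
    hC_directed (fun N => conjugatorsMod_nonempty φ₁ φ₂ N (h N N.isOpen'))
    (fun N => (hC_closed N).isCompact) hC_closed
  exact ⟨x, eq_conj_of_forall_mem_conjugatorsMod φ₁ φ₂ (Set.mem_iInter.mp hx)⟩

/-- Two continuous homomorphisms of profinite groups which become conjugate in every
finite quotient of the target are conjugate. -/
theorem conj_of_forall_quotient_conj {G G' : Type*}
    [Group G] [TopologicalSpace G] [IsTopologicalGroup G]
    [CompactSpace G] [T2Space G] [TotallyDisconnectedSpace G]
    [Group G'] [TopologicalSpace G'] [IsTopologicalGroup G']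
    [CompactSpace G'] [T2Space G'] [TotallyDisconnectedSpace G']
    (φ₁ φ₂ : G →* G') (hφ₁ : Continuous φ₁) (hφ₂ : Continuous φ₂)
    (h : ∀ (N : Subgroup G') [N.Normal], IsOpen (N : Set G') →
      ∃ x : G' ⧸ N, ∀ g : G,
        QuotientGroup.mk' N (φ₂ g) = x * QuotientGroup.mk' N (φ₁ g) * x⁻¹) :
    ∃ x : G', ∀ g : G, φ₂ g = x * φ₁ g * x⁻¹ :=
  conj_of_forall_quotient_conj_general φ₁ φ₂ h
end

section
/- Let G and G' be profinite groups. Suppose that for every open normal subgroup N of G' we are given a continuous group homomorphism φ_N : G → G'/N, and that these are compatible up to conjugacy: whenever N ⊆ M are open normal subgroups of G', the composite of φ_N with the canonical projection G'/N → G'/M is conjugate in G'/M to φ_M. Then there exists a continuous group homomorphism φ : G → G' such that for every open normal subgroup N of G', the composite of φ with the quotient map G' → G'/N is conjugate in G'/N to φ_N. -/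
/-!
For each open normal subgroup `N` of `G'`, the homomorphisms `G → G'/N` conjugate to `φ_N`
form a finite nonempty set, and compatibility up to conjugacy says exactly that the projection
`G'/N → G'/M` carries the conjugates of `φ_N` to conjugates of `φ_M`. König's lemma for
cofiltered systems of finite nonempty sets then yields conjugates `u_N` of the `φ_N` that are
compatible on the nose, and since `G'` is the inverse limit of its finite quotients, such a
compatible family of continuous homomorphisms comes from a single continuous `G → G'`.
-/

open CategoryTheory

namespace MonoidHom

variable {G Q R : Type*} [Group G] [Group Q] [Group R]

def conjugates (f : G →* Q) : Set (G →* Q) :=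
  Set.range fun x : Q => (MulAut.conj x).toMonoidHom.comp f

theorem mem_conjugates {f p : G →* Q} :
    p ∈ f.conjugates ↔ ∃ x : Q, ∀ g, p g = x * f g * x⁻¹ := by
  simp only [conjugates, Set.mem_range, MonoidHom.ext_iff, eq_comm (b := p _)]
  rfl

theorem self_mem_conjugates (f : G →* Q) : f ∈ f.conjugates :=
  mem_conjugates.2 ⟨1, by simp⟩

instance [Finite Q] (f : G →* Q) : Finite f.conjugates :=
  (Set.finite_range _).to_subtype

theorem comp_mem_conjugates {f p : G →* Q} {f' : G →* R} (π : Q →* R)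
    (hp : p ∈ f.conjugates) (hf : π.comp f ∈ f'.conjugates) : π.comp p ∈ f'.conjugates := by
  obtain ⟨x, hx⟩ := mem_conjugates.1 hp
  obtain ⟨y, hy⟩ := mem_conjugates.1 hf
  refine mem_conjugates.2 ⟨π x * y, fun g => ?_⟩
  have hyg : π (f g) = y * f' g * y⁻¹ := hy g
  simp only [comp_apply, hx, map_mul, map_inv, hyg, mul_inv_rev, mul_assoc]

theorem continuous_of_mem_conjugates [TopologicalSpace G] [TopologicalSpace Q] [ContinuousMul Q]
    {f p : G →* Q} (hf : Continuous f) (hp : p ∈ f.conjugates) : Continuous p := by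
  obtain ⟨x, hx⟩ := mem_conjugates.1 hp
  rw [show ⇑p = fun g => x * f g * x⁻¹ from funext hx]
  fun_prop

end MonoidHom

namespace ProfiniteGrp

variable {P : Type*} [Group P] [TopologicalSpace P]

section Lift

variable [IsTopologicalGroup P] [CompactSpace P] [TotallyDisconnectedSpace P]

theorem eq_of_forall_mk_eq {a b : P}
    (h : ∀ N : OpenNormalSubgroup P, (a : P ⧸ N.toSubgroup) = b) : a = b :=
  toLimit_injective (of P) (Subtype.ext (funext h))

theorem exists_mk_eq_of_compatible (q : ∀ N : OpenNormalSubgroup P, P ⧸ N.toSubgroup)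
    (hq : ∀ N M (h : N ≤ M),
      QuotientGroup.map N.toSubgroup M.toSubgroup (.id P) h (q N) = q M) :
    ∃ a : P, ∀ N : OpenNormalSubgroup P, (a : P ⧸ N.toSubgroup) = q N := by
  obtain ⟨a, ha⟩ := toLimit_surjective (of P) ⟨q, fun {N M} f => hq N M (leOfHom f)⟩
  exact ⟨a, fun N => congrFun (congrArg Subtype.val ha) N⟩

theorem continuous_of_forall_continuous_mk {X : Type*} [TopologicalSpace X] {f : X → P}
    (hf : ∀ N : OpenNormalSubgroup P, Continuous fun x => (f x : P ⧸ N.toSubgroup)) :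
    Continuous f := by
  refine continuous_def.2 fun U hU => isOpen_iff_forall_mem_open.2 fun x hx => ?_
  obtain ⟨N, hN⟩ := exist_openNormalSubgroup_sub_open_nhds_of_one
    (hU.preimage (continuous_const_mul (f x))) (by simpa using hx)
  refine ⟨(fun y => (f y : P ⧸ N.toSubgroup)) ⁻¹' {(f x : P ⧸ N.toSubgroup)},
    fun y hy => ?_, (hf N).isOpen_preimage _ (isOpen_discrete _), rfl⟩
  simpa using hN (QuotientGroup.eq.1 hy.symm)

theorem exists_continuous_lift_of_compatible {G : Type*} [Group G] [TopologicalSpace G]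
    (u : ∀ N : OpenNormalSubgroup P, G →* P ⧸ N.toSubgroup) (hu : ∀ N, Continuous (u N))
    (hcompat : ∀ N M (h : N ≤ M),
      (QuotientGroup.map N.toSubgroup M.toSubgroup (.id P) h).comp (u N) = u M) :
    ∃ ψ : G →* P, Continuous ψ ∧ ∀ N, (QuotientGroup.mk' N.toSubgroup).comp ψ = u N := by
  choose ψ hψ using fun g =>
    exists_mk_eq_of_compatible (fun N => u N g) fun N M h => DFunLike.congr_fun (hcompat N M h) g
  let ψhom : G →* P :=
    { toFun := ψ
      map_one' := eq_of_forall_mk_eq fun N => by simp [hψ]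
      map_mul' := fun g h => eq_of_forall_mk_eq fun N => by simp [hψ] }
  exact ⟨ψhom, continuous_of_forall_continuous_mk fun N => (hu N).congr fun g => (hψ g N).symm,
    fun N => MonoidHom.ext fun g => hψ g N⟩

end Lift

variable {G : Type*} [Group G]

def conjugatesSystem (φ : ∀ N : OpenNormalSubgroup P, G →* P ⧸ N.toSubgroup)
    (hφ : ∀ N M (h : N ≤ M),
      (QuotientGroup.map N.toSubgroup M.toSubgroup (.id P) h).comp (φ N) ∈ (φ M).conjugates) :
    OpenNormalSubgroup P ⥤ Type _ where
  obj N := (φ N).conjugates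
  map {N M} f := TypeCat.ofHom fun p =>
    ⟨_, MonoidHom.comp_mem_conjugates _ p.2 (hφ N M (leOfHom f))⟩
  map_id _ := ConcreteCategory.hom_ext _ _ fun p => Subtype.ext <|
    (congrArg (MonoidHom.comp · p.1) (QuotientGroup.map_id _)).trans (MonoidHom.id_comp _)
  map_comp f g := ConcreteCategory.hom_ext _ _ fun p => Subtype.ext <|
    (congrArg (MonoidHom.comp · p.1)
      (QuotientGroup.map_comp_map _ _ _ (.id P) (.id P) (leOfHom f) (leOfHom g)).symm).trans
      (MonoidHom.comp_assoc _ _ _)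

theorem exists_compatible_conjugates [IsTopologicalGroup P] [CompactSpace P]
    (φ : ∀ N : OpenNormalSubgroup P, G →* P ⧸ N.toSubgroup)
    (hφ : ∀ N M (h : N ≤ M),
      (QuotientGroup.map N.toSubgroup M.toSubgroup (.id P) h).comp (φ N) ∈ (φ M).conjugates) :
    ∃ u : ∀ N : OpenNormalSubgroup P, G →* P ⧸ N.toSubgroup,
      (∀ N, u N ∈ (φ N).conjugates) ∧
      ∀ N M (h : N ≤ M),
        (QuotientGroup.map N.toSubgroup M.toSubgroup (.id P) h).comp (u N) = u M := by
  have : ∀ N, Nonempty ((conjugatesSystem φ hφ).obj N) :=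
    fun N => ⟨⟨φ N, (φ N).self_mem_conjugates⟩⟩
  have : ∀ N, Finite ((conjugatesSystem φ hφ).obj N) :=
    fun N => inferInstanceAs (Finite (φ N).conjugates)
  obtain ⟨u, hu⟩ := nonempty_sections_of_finite_cofiltered_system (conjugatesSystem φ hφ)
  exact ⟨fun N => (u N).1, fun N => (u N).2,
    fun N M h => congrArg Subtype.val (hu (homOfLE h))⟩

end ProfiniteGrp

/-- Given a family of continuous homomorphisms from a profinite group `G` to the finite
quotients of a profinite group `G'`, compatible up to conjugacy, there is a continuous
homomorphism `G → G'` inducing each member of the family up to conjugacy. -/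
theorem exists_lift_of_compatible_up_to_conj {G G' : Type*}
    [Group G] [TopologicalSpace G]
    [Group G'] [TopologicalSpace G'] [IsTopologicalGroup G']
    [CompactSpace G'] [TotallyDisconnectedSpace G']
    (φ : ∀ (N : Subgroup G') [N.Normal], IsOpen (N : Set G') → (G →* G' ⧸ N))
    (hcont : ∀ (N : Subgroup G') [N.Normal] (hN : IsOpen (N : Set G')),
      Continuous (φ N hN))
    (hcompat : ∀ (N M : Subgroup G') [N.Normal] [M.Normal]
      (hN : IsOpen (N : Set G')) (hM : IsOpen (M : Set G')) (hNM : N ≤ M),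
      ∃ x : G' ⧸ M, ∀ g : G,
        QuotientGroup.map N M (MonoidHom.id G') (by simpa using hNM) (φ N hN g) =
          x * (φ M hM g) * x⁻¹) :
    ∃ ψ : G →* G', Continuous ψ ∧
      ∀ (N : Subgroup G') [N.Normal] (hN : IsOpen (N : Set G')),
        ∃ x : G' ⧸ N, ∀ g : G,
          QuotientGroup.mk' N (ψ g) = x * (φ N hN g) * x⁻¹ := by
  obtain ⟨u, hu_conj, hu_compat⟩ := ProfiniteGrp.exists_compatible_conjugates
    (fun N => φ N.toSubgroup N.isOpen')
    fun N M h => MonoidHom.mem_conjugates.2 (hcompat _ _ _ _ h)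
  obtain ⟨ψ, hψ, hψu⟩ := ProfiniteGrp.exists_continuous_lift_of_compatible u
    (fun N => MonoidHom.continuous_of_mem_conjugates (hcont _ _) (hu_conj N)) hu_compat
  refine ⟨ψ, hψ, fun N _ hN => ?_⟩
  obtain ⟨x, hx⟩ := MonoidHom.mem_conjugates.1 (hu_conj ⟨⟨N, hN⟩, ‹_›⟩)
  exact ⟨x, fun g => (DFunLike.congr_fun (hψu _) g).trans (hx g)⟩
end

section
/- Let f : G → H be a continuous homomorphism of profinite groups. Then f is surjective if and only if the following holds: for every finite set S equipped with a continuous action of H (equivalently, an action all of whose point stabilizers are open subgroups of H), S is connected as an H-set precisely when S, regarded as a G-set via f, is connected. -/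
/-!
If `h ∉ f(G)`, then since `f(G)` is compact, hence closed, and a closed subgroup of a profinite
group is the intersection of the open subgroups containing it, some open subgroup `U ⊇ f(G)`
misses `h`. The finite `H`-set `H ⧸ U` is connected, but `f(G) ⊆ U` fixes the coset `U`, so it is
not connected as a `G`-set.
-/

open MulAction

universe w

theorem exists_isOpen_subgroup_ge_notMem {H : Type*} [Group H] [TopologicalSpace H]
    [IsTopologicalGroup H] [CompactSpace H] [TotallyDisconnectedSpace H] {K : Subgroup H}
    (hK : IsClosed (K : Set H)) {h : H} (hh : h ∉ K) :
    ∃ U : Subgroup H, IsOpen (U : Set H) ∧ K ≤ U ∧ h ∉ U := by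
  rw [show K = (⟨K, hK⟩ : ClosedSubgroup H) from rfl, ProfiniteGrp.closedSubgroup_eq_sInf_open,
    Subgroup.mem_sInf] at hh
  push Not at hh
  obtain ⟨U, ⟨hU, hKU⟩, hhU⟩ := hh
  exact ⟨U, hU, hKU, hhU⟩

theorem isOpen_stabilizer_quotient {H : Type*} [Group H] [TopologicalSpace H]
    [IsTopologicalGroup H] {U : Subgroup H} (hU : IsOpen (U : Set H)) (x : H ⧸ U) :
    IsOpen (stabilizer H x : Set H) :=
  have := QuotientGroup.discreteTopology hU
  stabilizer_isOpen H x

section Shrink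

variable {H X : Type*} [Group H] [MulAction H X] [Small.{w} X]

@[simp]
theorem stabilizer_shrink (s : Shrink.{w} X) :
    stabilizer H s = stabilizer H ((equivShrink X).symm s) := by
  ext g
  simp [mem_stabilizer_iff, ← (equivShrink X).symm.injective.eq_iff]

instance [IsPretransitive H X] : IsPretransitive H (Shrink.{w} X) where
  exists_smul_eq s t := by
    obtain ⟨g, hg⟩ := exists_smul_eq H ((equivShrink X).symm s) ((equivShrink X).symm t)
    exact ⟨g, (equivShrink X).symm.injective (by simpa using hg)⟩

end Shrink

theorem isPretransitive_iff_forall_exists_map_smul_eq {G H S : Type*} [Monoid G] [Monoid H]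
    [MulAction H S] {f : G →* H} (hf : Function.Surjective f) :
    IsPretransitive H S ↔ ∀ s t : S, ∃ g : G, f g • s = t := by
  refine ⟨fun _ s t => ?_, fun h => ⟨fun s t => ?_⟩⟩
  · obtain ⟨k, rfl⟩ := exists_smul_eq H s t
    obtain ⟨g, rfl⟩ := hf k
    exact ⟨g, rfl⟩
  · obtain ⟨g, hg⟩ := h s t
    exact ⟨f g, hg⟩

theorem eq_top_of_forall_exists_map_smul_eq {G H : Type*} [Group G] [Group H] {f : G →* H}
    {U : Subgroup H} (hfU : f.range ≤ U) (htrans : ∀ x y : H ⧸ U, ∃ g : G, f g • x = y) :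
    U = ⊤ := by
  refine Subgroup.eq_top_iff' U |>.mpr fun h => ?_
  obtain ⟨g, hg⟩ := htrans ((1 : H) : H ⧸ U) h
  rw [MulAction.Quotient.smul_mk, smul_eq_mul, mul_one, QuotientGroup.eq] at hg
  simpa using U.mul_mem (hfU ⟨g, rfl⟩) hg

theorem surjective_iff_connected_detection_general {G H : Type*}
    [Group G] [TopologicalSpace G]
    [CompactSpace G]
    [Group H] [TopologicalSpace H] [IsTopologicalGroup H]
    [CompactSpace H] [T2Space H] [TotallyDisconnectedSpace H]
    (f : G →* H) (hf : Continuous f) :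
    Function.Surjective f ↔
      ∀ (S : Type) [Finite S] [MulAction H S],
        (∀ s : S, IsOpen ((MulAction.stabilizer H s : Subgroup H) : Set H)) →
        ((Nonempty S ∧ MulAction.IsPretransitive H S) ↔
          (Nonempty S ∧ ∀ s t : S, ∃ g : G, f g • s = t)) := by
  refine ⟨fun hsurj S _ _ _ => and_congr_right fun _ =>
    isPretransitive_iff_forall_exists_map_smul_eq hsurj, fun hdet h => ?_⟩
  by_contra hh
  have hrange : IsClosed (f.range : Set H) := by
    rw [MonoidHom.coe_range]
    exact (isCompact_range hf).isClosed
  obtain ⟨U, hU, hfU, hhU⟩ :=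
    exists_isOpen_subgroup_ge_notMem hrange (mt MonoidHom.mem_range.mp (by simpa using hh))
  have : Finite (H ⧸ U) := U.quotient_finite_of_isOpen hU
  -- the test sets live in `Type`, so `H ⧸ U` is replaced by an equivalent copy there
  have hS := (hdet (Shrink.{0} (H ⧸ U)) fun s => by simpa using isOpen_stabilizer_quotient hU _).mp
    ⟨⟨equivShrink _ ((1 : H) : H ⧸ U)⟩, inferInstance⟩
  have hUtop : U = ⊤ := eq_top_of_forall_exists_map_smul_eq hfU fun x y => by
    obtain ⟨g, hg⟩ := hS.2 (equivShrink _ x) (equivShrink _ y)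
    exact ⟨g, (equivShrink.{0} (H ⧸ U)).injective (by rwa [equivShrink_smul])⟩
  exact hhU (hUtop ▸ Subgroup.mem_top h)

/-- A continuous homomorphism of profinite groups is surjective iff it detects
connectedness of finite continuous actions: for every finite set `S` with a continuous
`H`-action (i.e. all stabilizers are open), `S` is nonempty and transitive as an
`H`-set precisely when it is nonempty and transitive as a `G`-set via `f`. -/
theorem surjective_iff_connected_detection {G H : Type*}
    [Group G] [TopologicalSpace G] [IsTopologicalGroup G]
    [CompactSpace G] [T2Space G] [TotallyDisconnectedSpace G]
    [Group H] [TopologicalSpace H] [IsTopologicalGroup H]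
    [CompactSpace H] [T2Space H] [TotallyDisconnectedSpace H]
    (f : G →* H) (hf : Continuous f) :
    Function.Surjective f ↔
      ∀ (S : Type) [Finite S] [MulAction H S],
        (∀ s : S, IsOpen ((MulAction.stabilizer H s : Subgroup H) : Set H)) →
        ((Nonempty S ∧ MulAction.IsPretransitive H S) ↔
          (Nonempty S ∧ ∀ s t : S, ∃ g : G, f g • s = t)) :=
  surjective_iff_connected_detection_general f hf
end

section
/- Let p be a prime number, let R be a commutative ring in which p·1 = 0, and let G be a finite p-group. Then the augmentation ideal of the group algebra R[G] — the kernel of the R-algebra homomorphism R[G] → R sending every group element to 1 — is a nilpotent ideal. -/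
/-!
Induction on `|G|`. A nontrivial `p`-group has a central element `z ≠ 1`. The kernel of
`R[G] → R[G/⟨z⟩]` lies in the ideal generated by `z - 1`, and since `z - 1` is central the
powers of that ideal are generated by the powers of `z - 1`, which vanish:
`(z - 1) ^ p ^ t = z ^ p ^ t - 1 = 0` because `p = 0` in `R`. The augmentation ideal of `G`
maps into that of `G/⟨z⟩`, which is nilpotent by induction, so some power of it lies in that
kernel, and a larger power vanishes.
-/

open MonoidAlgebra

namespace Ideal

variable {A B : Type*} [Ring A] [Ring B]

theorem pow_le_comap_pow (f : A →+* B) {I : Ideal A} {J : Ideal B} (h : I ≤ J.comap f) :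
    ∀ n : ℕ, I ^ n ≤ (J ^ n).comap f
  | 0 => by simp only [Submodule.pow_zero, one_eq_top, comap_top, le_refl]
  | n + 1 => by
    rw [Submodule.pow_succ, Submodule.pow_succ]
    refine mul_le.2 fun r hr s hs => ?_
    rw [mem_comap, map_mul]
    exact mul_mem_mul (pow_le_comap_pow f h n hr) (h hs)

theorem IsTwoSided.pow_mul (I : Ideal A) [I.IsTwoSided] (m : ℕ) :
    ∀ k : ℕ, I ^ (m * k) = (I ^ m) ^ k
  | 0 => by rw [Nat.mul_zero, Submodule.pow_zero, Submodule.pow_zero]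
  | k + 1 => by
    rw [Nat.mul_succ, IsTwoSided.pow_add, IsTwoSided.pow_mul I m k, Submodule.pow_succ]

theorem pow_mul_eq_bot_of_le_comap {f : A →+* B} {I : Ideal A} {J : Ideal B} [I.IsTwoSided]
    {m k : ℕ} (h : I ≤ J.comap f) (hJ : J ^ m = ⊥) (hf : RingHom.ker f ^ k = ⊥) :
    I ^ (m * k) = ⊥ := by
  have hIm : I ^ m ≤ RingHom.ker f := (pow_le_comap_pow f h m).trans_eq (by rw [hJ]; rfl)
  rw [IsTwoSided.pow_mul, eq_bot_iff, ← hf]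
  exact pow_right_mono hIm k

theorem isTwoSided_span_singleton_of_commute {c : A} (hc : ∀ x, Commute c x) :
    (span {c}).IsTwoSided := by
  refine ⟨fun b ha => ?_⟩
  obtain ⟨r, rfl⟩ := mem_span_singleton'.1 ha
  rw [mul_assoc, hc b, ← mul_assoc]
  exact mul_mem_left _ _ (mem_span_singleton_self c)

theorem span_singleton_pow_eq_bot_of_commute {c : A} (hc : ∀ x, Commute c x) {n : ℕ}
    (hn : c ^ n = 0) : span {c} ^ n = ⊥ := by
  have := isTwoSided_span_singleton_of_commute hc
  rw [span_singleton_pow, hn, span_singleton_eq_bot]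

end Ideal

theorem sub_one_pow_prime_pow_eq_zero {A : Type*} [Ring A] {p : ℕ} (hp : p.Prime)
    (hpA : (p : A) = 0) {x : A} {n : ℕ} (hx : x ^ p ^ n = 1) : (x - 1) ^ p ^ n = 0 := by
  obtain ⟨r, hr⟩ := (Commute.one_right (x - 1)).exists_add_pow_prime_pow_eq hp n
  rwa [sub_add_cancel, hx, one_pow, hpA, zero_mul, zero_mul, zero_mul, add_zero,
    right_eq_add] at hr

theorem Subgroup.normal_of_le_center {G : Type*} [Group G] {N : Subgroup G}
    (h : N ≤ Subgroup.center G) : N.Normal :=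
  ⟨fun n hn g => by rwa [Subgroup.mem_center_iff.1 (h hn) g, mul_inv_cancel_right]⟩

theorem Subgroup.card_quotient_lt {G : Type*} [Group G] [Finite G] {H : Subgroup G}
    (hH : H ≠ ⊥) : Nat.card (G ⧸ H) < Nat.card G := by
  rw [H.card_eq_card_quotient_mul_card_subgroup]
  exact lt_mul_of_one_lt_right Nat.card_pos (H.one_lt_card_iff_ne_bot.2 hH)

namespace MonoidAlgebra

section Ring

variable {R : Type*} [Ring R] {G : Type*} [Group G]

theorem ker_mapDomainRingHom_mk_le_span (N : Subgroup G) [N.Normal] :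
    RingHom.ker (mapDomainRingHom R (QuotientGroup.mk' N)) ≤
      Ideal.span ((fun n => of R G n - 1) '' N) := by
  set S := Ideal.span ((fun n => of R G n - 1) '' (N : Set G))
  have hsingle : ∀ g r, single g r - single (QuotientGroup.mk (s := N) g).out r ∈ S := by
    intro g r
    obtain ⟨n, hn⟩ := QuotientGroup.mk_out_eq_mul N g
    have : single g r - single (QuotientGroup.mk (s := N) g).out r =
        -(single g r * (of R G n - 1)) := by
      simp [hn, mul_sub, single_mul_single]
    rw [this]
    exact S.neg_mem (S.mul_mem_left _ (Ideal.subset_span ⟨n, n.2, rfl⟩))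
  -- moving every `g` to the chosen representative of `gN` changes `y` only by an element of `S`
  have hdiff : ∀ y,
      y - mapDomain Quotient.out (mapDomainRingHom R (QuotientGroup.mk' N) y) ∈ S := by
    intro y
    induction y using induction_linear with
    | zero => simp
    | add x y hx hy =>
      rw [map_add, mapDomain_add, add_sub_add_comm]
      exact S.add_mem hx hy
    | single g r =>
      rw [mapDomainRingHom_apply, mapDomain_single, mapDomain_single]
      exact hsingle g r
  intro x hx
  simpa [RingHom.mem_ker.1 hx] using hdiff x

theorem of_sub_one_mem_span_of_mem_zpowers {z n : G} (hz : IsOfFinOrder z)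
    (hn : n ∈ Subgroup.zpowers z) : of R G n - 1 ∈ Ideal.span {of R G z - 1} := by
  obtain ⟨k, rfl⟩ := hz.mem_powers_iff_mem_zpowers.2 hn
  rw [map_pow, ← geom_sum_mul]
  exact Ideal.mul_mem_left _ _ (Ideal.mem_span_singleton_self _)

theorem ker_mapDomainRingHom_zpowers_pow_eq_bot {p : ℕ} (hp : p.Prime) (hpR : (p : R) = 0)
    {z : G} (hz : z ∈ Subgroup.center G) {t : ℕ} (hzt : z ^ p ^ t = 1)
    [(Subgroup.zpowers z).Normal] :
    RingHom.ker (mapDomainRingHom R (QuotientGroup.mk' (Subgroup.zpowers z))) ^ p ^ t = ⊥ := by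
  have hc : ∀ x, Commute (of R G z - 1) x := fun x =>
    (of_commute (fun g => (Subgroup.mem_center_iff.1 hz g).symm) x).sub_left (Commute.one_left x)
  have hpA : (p : MonoidAlgebra R G) = 0 := by
    rw [← map_natCast (singleOneRingHom (M := G)), hpR, map_zero]
  have hc_pow : (of R G z - 1) ^ p ^ t = 0 :=
    sub_one_pow_prime_pow_eq_zero hp hpA (by rw [← map_pow, hzt, map_one])
  rw [eq_bot_iff, ← Ideal.span_singleton_pow_eq_bot_of_commute hc hc_pow]
  refine Ideal.pow_right_mono ((ker_mapDomainRingHom_mk_le_span _).trans (Ideal.span_le.2 ?_)) _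
  rintro _ ⟨n, hn, rfl⟩
  exact of_sub_one_mem_span_of_mem_zpowers
    (isOfFinOrder_iff_pow_eq_one.2 ⟨p ^ t, pow_pos hp.pos t, hzt⟩) hn

end Ring

variable {R : Type*} [CommRing R] {G : Type*} [Group G]

variable (R G) in
noncomputable abbrev augmentationIdeal : Ideal (MonoidAlgebra R G) := RingHom.ker (lift R R G 1)

theorem augmentationIdeal_eq_bot_of_subsingleton [Subsingleton G] :
    augmentationIdeal R G = ⊥ := by
  refine eq_bot_iff.2 fun x hx => ?_
  have hx1 : x = single 1 (x.coeff 1) := by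
    ext g
    rw [Subsingleton.elim g 1, coeff_single, Finsupp.single_eq_same]
  rw [augmentationIdeal, RingHom.mem_ker, hx1, lift_single, MonoidHom.one_apply, smul_eq_mul,
    mul_one] at hx
  rw [Submodule.mem_bot, hx1, hx, single_zero]

theorem augmentationIdeal_eq_comap {H : Type*} [Group H] (f : G →* H) :
    augmentationIdeal R G = (augmentationIdeal R H).comap (mapDomainRingHom R f) := by
  have : (lift R R H 1).comp (mapDomainAlgHom R R f) = lift R R G 1 := by
    ext; simp
  ext x
  simp [augmentationIdeal, RingHom.mem_ker, ← this]

end MonoidAlgebra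

/-- If `p` is a prime with `p = 0` in the commutative ring `R` and `G` is a finite
`p`-group, then the augmentation ideal of the group algebra `R[G]` is nilpotent. -/
theorem augmentationIdeal_nilpotent {R : Type*} [CommRing R] (p : ℕ) (hp : p.Prime)
    (hpR : (p : R) = 0) {G : Type*} [Group G] [Finite G] (hG : IsPGroup p G) :
    ∃ n : ℕ, 0 < n ∧
      (RingHom.ker ((MonoidAlgebra.lift R R G) 1)) ^ n = ⊥ := by
  have : Fact p.Prime := ⟨hp⟩
  rename_i instG _
  induction G using Finite.induction_subsingleton_or_nontrivial generalizing instG with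
  | hbase G =>
    exact ⟨1, one_pos, (Submodule.pow_one _).trans augmentationIdeal_eq_bot_of_subsingleton⟩
  | hstep G ih =>
    have := hG.center_nontrivial
    obtain ⟨z, hz, hz1⟩ := (Subgroup.center G).exists_ne_one_of_nontrivial
    have := Subgroup.normal_of_le_center (Subgroup.zpowers_le.2 hz)
    obtain ⟨m, hm, hQ⟩ :=
      ih _ (Subgroup.card_quotient_lt (Subgroup.zpowers_eq_bot.not.2 hz1)) (hG.to_quotient _)
    obtain ⟨t, hzt⟩ := hG z
    exact ⟨m * p ^ t, Nat.mul_pos hm (pow_pos hp.pos t),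
      Ideal.pow_mul_eq_bot_of_le_comap
        (augmentationIdeal_eq_comap (R := R) (QuotientGroup.mk' (Subgroup.zpowers z))).le hQ
        (ker_mapDomainRingHom_zpowers_pow_eq_bot hp hpR hz hzt)⟩
end

section
/- Let k be a field and G a finite group. The regular representation of G over k — the k-vector space of functions G → k, with G acting by translation — is unipotent if and only if every prime number dividing the order of G is zero in k; equivalently, if and only if G is a p-group for p the characteristic of k (where in characteristic 0 this means G is trivial). -/
/-!
If `ρ` is unipotent, every `ρ g - 1` is nilpotent. For `g` of prime order `p` with `p ≠ 0`
in `k`, write `ρ g = 1 + u`: then `0 = (ρ g)^p - 1 = u * ∑ (ρ g)^i`, and `∑ (ρ g)^i` is `p`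
plus a nilpotent commuting with it, hence a unit, so `u = 0`. Since the regular
representation is faithful, no such `g` exists.

Conversely, let `G` be a `p`-group with `p = char k`. In a nonzero representation, the additive
subgroup generated by an orbit is finite of order divisible by `p`, so counting fixed points of `G`
on it yields a nonzero invariant vector. Applied to successive quotients, this makes the series
`W₀ = 0`, `W_{n+1} = {v | ρ g v - v ∈ W_n for all g}` grow strictly until it exhausts the
finite-dimensional `V`.
-/

/-- A representation is unipotent if it admits a finite chain of subrepresentations
`0 = W₀ ⊆ W₁ ⊆ ⋯ ⊆ W_m = V` on whose successive quotients the group acts trivially. -/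
def Representation.IsUnipotent {k G V : Type*} [Field k] [Group G] [AddCommGroup V]
    [Module k V] (ρ : Representation k G V) : Prop :=
  ∃ (m : ℕ) (W : Fin (m + 1) → Submodule k V),
    W 0 = ⊥ ∧ W (Fin.last m) = ⊤ ∧ Monotone W ∧
    ∀ (g : G) (i : Fin m), ∀ v ∈ W i.succ, ρ g v - v ∈ W i.castSucc

/-- The regular representation of a group `G` over a field `k`: the space of functions
`G → k` with `(g · f) h = f (g⁻¹ h)`. -/
def regularRepresentation (k G : Type*) [Field k] [Group G] :
    Representation k G (G → k) where
  toFun g :=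
    { toFun := fun f h => f (g⁻¹ * h)
      map_add' := fun _ _ => rfl
      map_smul' := fun _ _ => rfl }
  map_one' := by
    ext f h
    simp
  map_mul' := by
    intro g g'
    ext f h
    simp [mul_assoc]

open Finset in
theorem eq_one_of_pow_eq_one_of_isNilpotent_sub_one {R : Type*} [Ring R] {a : R} {n : ℕ}
    (hn : IsUnit (n : R)) (hpow : a ^ n = 1) (hnil : IsNilpotent (a - 1)) : a = 1 := by
  set t := ∑ i ∈ range n, ∑ j ∈ range i, a ^ j
  have hcomm : Commute (a - 1) t :=
    .sum_right _ _ _ fun i _ ↦ .sum_right _ _ _ fun j _ ↦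
      ((Commute.refl a).sub_left (Commute.one_left a)).pow_right j
  have hsum : ∑ i ∈ range n, a ^ i = n + (a - 1) * t := by
    rw [mul_sum]
    simp only [mul_geom_sum, sum_sub_distrib, sum_const, card_range, nsmul_one]
    abel
  have hunit : IsUnit (∑ i ∈ range n, a ^ i) :=
    hsum ▸ (hcomm.isNilpotent_mul_right hnil).isUnit_add_left_of_commute hn
      (Nat.cast_commute n _).symm
  have hzero : (a - 1) * ∑ i ∈ range n, a ^ i = 0 := by rw [mul_geom_sum, hpow, sub_self]
  exact sub_eq_zero.mp (hunit.mul_left_eq_zero.mp hzero)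

namespace Representation

variable {k G V : Type*} [Field k] [Group G] [AddCommGroup V] [Module k V]

theorem IsUnipotent.isNilpotent_sub_one {ρ : Representation k G V} (h : ρ.IsUnipotent) (g : G) :
    IsNilpotent (ρ g - 1) := by
  obtain ⟨m, W, hW0, hWtop, -, hW⟩ := h
  have key : ∀ i : Fin (m + 1), ∀ v ∈ W i, ((ρ g - 1) ^ (i : ℕ)) v = 0 := by
    refine Fin.induction (fun v hv ↦ by simpa [hW0] using hv) fun i ih v hv ↦ ?_
    rw [Fin.val_succ, pow_succ, Module.End.mul_apply, LinearMap.sub_apply, Module.End.one_apply]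
    simpa only [Fin.val_castSucc] using ih _ (hW g i v hv)
  refine ⟨m, LinearMap.ext fun v ↦ ?_⟩
  simpa using key (Fin.last m) v (hWtop ▸ Submodule.mem_top)

theorem IsUnipotent.eq_one_of_pow_eq_one {ρ : Representation k G V} (h : ρ.IsUnipotent)
    {g : G} {n : ℕ} (hg : g ^ n = 1) (hn : (n : k) ≠ 0) : ρ g = 1 :=
  eq_one_of_pow_eq_one_of_isNilpotent_sub_one (by simpa using hn.isUnit.map (algebraMap k _))
    (by rw [← map_pow, hg, map_one]) (h.isNilpotent_sub_one g)

theorem IsUnipotent.natCast_eq_zero_of_prime_dvd_card [Finite G] {ρ : Representation k G V}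
    (h : ρ.IsUnipotent) (hρ : Function.Injective ρ) {p : ℕ} (hp : p.Prime)
    (hdvd : p ∣ Nat.card G) : (p : k) = 0 := by
  have : Fact p.Prime := ⟨hp⟩
  obtain ⟨g, hg⟩ := exists_prime_orderOf_dvd_card' p hdvd
  by_contra hpk
  have : ρ g = ρ 1 :=
    (h.eq_one_of_pow_eq_one (hg ▸ pow_orderOf_eq_one g) hpk).trans (map_one ρ).symm
  exact hp.ne_one (hg ▸ orderOf_eq_one_iff.2 (hρ this))

variable (ρ : Representation k G V)

/-- For `G`-stable `W`, the preimage of the invariants of `V ⧸ W`. It is defined for every `W`,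
so that the recursion in `invariantsSeries` carries no stability proofs. -/
def invariantsMod (W : Submodule k V) : Submodule k V :=
  ⨅ g, W.comap (ρ g - 1)

variable {ρ} in
theorem mem_invariantsMod {W : Submodule k V} {v : V} :
    v ∈ ρ.invariantsMod W ↔ ∀ g, ρ g v - v ∈ W := by
  simp [invariantsMod]

theorem invariantsMod_mono {W W' : Submodule k V} (h : W ≤ W') :
    ρ.invariantsMod W ≤ ρ.invariantsMod W' :=
  fun _ hv ↦ mem_invariantsMod.2 fun g ↦ h (mem_invariantsMod.1 hv g)

theorem invariantsMod_le_comap (W : Submodule k V) (g : G) :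
    ρ.invariantsMod W ≤ (ρ.invariantsMod W).comap (ρ g) := by
  intro v hv
  refine mem_invariantsMod.2 fun h ↦ ?_
  have : ρ h (ρ g v) - ρ g v = (ρ (h * g) v - v) - (ρ g v - v) := by
    rw [map_mul, Module.End.mul_apply]; abel
  rw [this]
  exact W.sub_mem (mem_invariantsMod.1 hv _) (mem_invariantsMod.1 hv g)

def invariantsSeries : ℕ → Submodule k V
  | 0 => ⊥
  | n + 1 => ρ.invariantsMod (invariantsSeries n)

theorem invariantsSeries_monotone : Monotone ρ.invariantsSeries := by
  refine monotone_nat_of_le_succ fun n ↦ ?_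
  induction n with
  | zero => exact bot_le
  | succ n ih => exact ρ.invariantsMod_mono ih

theorem invariantsSeries_le_comap (n : ℕ) (g : G) :
    ρ.invariantsSeries n ≤ (ρ.invariantsSeries n).comap (ρ g) := by
  cases n with
  | zero => exact bot_le
  | succ n => exact ρ.invariantsMod_le_comap _ g

theorem isUnipotent_of_invariantsSeries_eq_top {m : ℕ} (h : ρ.invariantsSeries m = ⊤) :
    ρ.IsUnipotent :=
  ⟨m, fun i ↦ ρ.invariantsSeries i, rfl, h, fun _ _ hij ↦ ρ.invariantsSeries_monotone hij,
    fun g _ _ hv ↦ mem_invariantsMod.1 hv g⟩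

theorem isUnipotent_of_subsingleton [Subsingleton G] : ρ.IsUnipotent :=
  ρ.isUnipotent_of_invariantsSeries_eq_top (m := 1) <| eq_top_iff.2 fun v _ ↦
    mem_invariantsMod.2 fun g ↦ by simp [Subsingleton.elim g 1]

theorem isUnipotent_of_forall_lt_invariantsMod [IsNoetherian k V]
    (h : ∀ W : Submodule k V, (∀ g, W ≤ W.comap (ρ g)) → W ≠ ⊤ →
      W < ρ.invariantsMod W) :
    ρ.IsUnipotent := by
  obtain ⟨n, hn⟩ := WellFounded.not_rel_apply_succ (r := (· > ·)) ρ.invariantsSeries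
  by_cases htop : ρ.invariantsSeries n = ⊤
  · exact ρ.isUnipotent_of_invariantsSeries_eq_top htop
  · exact absurd (h _ (ρ.invariantsSeries_le_comap n) htop) hn

theorem invariants_ne_bot_of_isPGroup [Finite G] {p : ℕ} [hp : Fact p.Prime] [CharP k p]
    (hG : IsPGroup p G) [Nontrivial V] : ρ.invariants ≠ ⊥ := by
  obtain ⟨v, hv⟩ := exists_ne (0 : V)
  let : DistribMulAction G V := DistribMulAction.compHom V ρ
  have hp_smul : ∀ x : V, p • x = 0 := fun x ↦ by
    rw [← Nat.cast_smul_eq_nsmul k, CharP.cast_eq_zero, zero_smul]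
  let S : AddSubgroup V := AddSubgroup.closure (Set.range fun g ↦ ρ g v)
  have hvS : v ∈ S := AddSubgroup.subset_closure ⟨1, by simp⟩
  have : Finite S := AddCommGroup.finite_of_fg_isAddTorsion S fun x ↦
    isOfFinAddOrder_iff_nsmul_eq_zero.2 ⟨p, hp.out.pos, Subtype.ext (hp_smul x)⟩
  have hdvd : p ∣ Nat.card S := by
    have := addOrderOf_dvd_natCard (⟨v, hvS⟩ : S)
    rwa [addOrderOf_eq_prime (Subtype.ext (hp_smul v)) (by simpa using hv)] at this
  have hS : ∀ g, S ≤ S.comap (ρ g).toAddMonoidHom := fun g ↦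
    AddSubgroup.closure_le _ |>.2 <| by
      rintro _ ⟨h, rfl⟩
      exact AddSubgroup.subset_closure ⟨g * h, by simp⟩
  let M : SubMulAction G V := ⟨S, fun g _ hx ↦ hS g hx⟩
  obtain ⟨w, hw, hw0⟩ := hG.exists_fixed_point_of_prime_dvd_card_of_fixed_point M hdvd
    (a := ⟨0, S.zero_mem⟩) fun g ↦ Subtype.ext (smul_zero g)
  refine Submodule.ne_bot_iff _ |>.2 ⟨w, fun g ↦ congrArg Subtype.val (hw g), ?_⟩
  exact fun h ↦ hw0 (Subtype.ext h.symm)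

theorem lt_invariantsMod_of_isPGroup [Finite G] {p : ℕ} [Fact p.Prime] [CharP k p]
    (hG : IsPGroup p G) {W : Submodule k V} (hW : ∀ g, W ≤ W.comap (ρ g))
    (hW_top : W ≠ ⊤) :
    W < ρ.invariantsMod W := by
  have : Nontrivial (V ⧸ W) := Submodule.Quotient.nontrivial_iff.2 hW_top
  obtain ⟨w, hw, hw0⟩ :=
    Submodule.ne_bot_iff _ |>.1 <| (ρ.quotient W hW).invariants_ne_bot_of_isPGroup hG
  obtain ⟨v, rfl⟩ := W.mkQ_surjective w
  refine SetLike.lt_iff_le_and_exists.2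
    ⟨fun x hx ↦ mem_invariantsMod.2 fun g ↦ W.sub_mem (hW g hx) hx, v, ?_, ?_⟩
  · exact mem_invariantsMod.2 fun g ↦ (Submodule.Quotient.eq W).1 (hw g)
  · simpa using hw0

theorem isUnipotent_of_isPGroup [IsNoetherian k V] [Finite G] {p : ℕ} [Fact p.Prime]
    [CharP k p] (hG : IsPGroup p G) : ρ.IsUnipotent :=
  ρ.isUnipotent_of_forall_lt_invariantsMod fun _ hW hW_top ↦
    ρ.lt_invariantsMod_of_isPGroup hG hW hW_top

end Representation

theorem regularRepresentation_injective (k G : Type*) [Field k] [Group G] :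
    Function.Injective (regularRepresentation k G) := by
  refine (injective_iff_map_eq_one _).2 fun g hg ↦ ?_
  classical
  have := congr_fun (LinearMap.congr_fun hg (Pi.single 1 1)) g
  change (Pi.single 1 1 : G → k) (g⁻¹ * g) = (Pi.single 1 1 : G → k) g at this
  simpa [Pi.single_apply, eq_comm] using this

/-- The regular representation of a finite group `G` over a field `k` is unipotent if
and only if every prime dividing the order of `G` is zero in `k`. -/
theorem regularRepresentation_isUnipotent_iff (k : Type*) [Field k]
    (G : Type*) [Group G] [Fintype G] :
    (regularRepresentation k G).IsUnipotent ↔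
      ∀ p : ℕ, p.Prime → p ∣ Fintype.card G → (p : k) = 0 := by
  refine ⟨fun h p hp hdvd ↦ h.natCast_eq_zero_of_prime_dvd_card
    (regularRepresentation_injective k G) hp (Nat.card_eq_fintype_card (α := G) ▸ hdvd),
    fun h ↦ ?_⟩
  rcases subsingleton_or_nontrivial G with _ | _
  · exact (regularRepresentation k G).isUnipotent_of_subsingleton
  · obtain ⟨p, hp, hdvd⟩ := Nat.exists_prime_and_dvd (Fintype.one_lt_card (α := G)).ne'
    have : Fact p.Prime := ⟨hp⟩
    have : CharP k p := (CharP.charP_iff_prime_eq_zero hp).2 (h p hp hdvd)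
    have hG : IsPGroup p G := .of_card <| Nat.card_eq_fintype_card.trans <|
      Nat.eq_prime_pow_of_unique_prime_dvd Fintype.card_ne_zero fun hq hqd ↦
        CharP.eq k ((CharP.charP_iff_prime_eq_zero hq).2 (h _ hq hqd)) this
    exact (regularRepresentation k G).isUnipotent_of_isPGroup hG
end
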